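/- Let A be a nonempty finite set, B a nonempty compact metric space, m ∈ ℕ, and b : A × B → ℝ^m, f : A × B → ℝ functions with b(α,·) and f(α,·) continuous on B for every α ∈ A. Define G : ℝ^m → ℝ by G(u) = max_{α∈A} min_{β∈B} (b(α,β)·u − f(α,β)). Then for every u ∈ ℝ^m and every ε > 0 there exists δ > 0 such that for every s ∈ ℝ^m with 0 < ‖s‖ ≤ δ, every α_s ∈ A satisfying min_{β∈B} (b(α_s,β)·(u+s) − f(α_s,β)) = G(u+s), and every β_s ∈ B minimizing β ↦ b(α_s,β)·(u+s) − f(α_s,β) over B, one has |G(u+s) − G(u) − b(α_s,β_s)·s| ≤ ε‖s‖. (That is, the nonconvex max–min Hamiltonian is semismooth on ℝ^m with generalized gradients b(α_s,β_s) taken at optimizers for the perturbed point.) -/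

import Mathlib

/-!
Write `G = max_α g_α` with `g_α(v) = min_β φ_α(v, β)` and `φ_α(v, β) = b(α,β)·v - f(α,β)`.
For an affine family, a minimizer `β₀` at `u` and a minimizer `β₁` at `u + s` squeeze
`g_α(u + s) - g_α(u) - b(α,β₁)·s` between `0` and `(b(α,β₀) - b(α,β₁))·s`. Two semicontinuity
facts make the right-hand side `o(‖s‖)` when `α` is optimal at `u + s`: since `A` is finite and
each `g_α` is continuous, an `α` optimal at a point near `u` is already optimal at `u`; and since
`B` is compact, minimizers at points near `u` lie near the set of minimizers at `u`, so
`b(α,β₁)` is within `ε` of some `b(α,β₀)`.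
-/

open Set Filter Topology

section ArgminSemicontinuity

variable {X B : Type*} [TopologicalSpace X] [TopologicalSpace B] [CompactSpace B]

theorem continuous_iInf_of_compactSpace {φ : X → B → ℝ} (hφ : Continuous ↿φ) :
    Continuous fun x => ⨅ β, φ x β := by
  have h := isCompact_univ.continuous_sInf hφ
  simp only [image_univ] at h
  exact h

theorem eventually_forall_isMinOn_mem {φ : X → B → ℝ} (hφ : Continuous ↿φ) {u : X}
    {U : Set B} (hU : IsOpen U) (hmin : ∀ β, IsMinOn (φ u) univ β → β ∈ U) :
    ∀ᶠ v in 𝓝 u, ∀ β, IsMinOn (φ v) univ β → β ∈ U := by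
  rcases Uᶜ.eq_empty_or_nonempty with hUc | hUc
  · exact .of_forall fun _ β _ => compl_empty_iff.1 hUc ▸ mem_univ β
  have : Nonempty B := hUc.to_subtype.map Subtype.val
  have hK : IsCompact Uᶜ := hU.isClosed_compl.isCompact
  have hφ_right : ∀ v, Continuous (φ v) := fun v => hφ.comp (.prodMk_right v)
  have hbdd : ∀ v, BddBelow (φ v '' univ) :=
    fun v => isCompact_univ.bddBelow_image (hφ_right v).continuousOn
  -- the minimum of `φ u` is not attained on the compact set `Uᶜ`, and this gap persists near `u`
  have hgap : sInf (φ u '' univ) < sInf (φ u '' Uᶜ) := by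
    refine (hK.lt_sInf_iff_of_continuous hUc (hφ_right u).continuousOn _).2 fun β hβU => ?_
    by_contra! h
    exact hβU (hmin β fun β' _ => h.trans (csInf_le (hbdd u) (mem_image_of_mem _ (mem_univ β'))))
  filter_upwards [(isCompact_univ.continuous_sInf hφ).continuousAt.eventually_lt
    (hK.continuous_sInf hφ).continuousAt hgap] with v hv β hβ
  by_contra hβU
  have hle : sInf (φ v '' Uᶜ) ≤ φ v β :=
    csInf_le (hK.bddBelow_image (hφ_right v).continuousOn) (mem_image_of_mem _ hβU)
  have hge : φ v β ≤ sInf (φ v '' univ) :=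
    le_csInf (univ_nonempty.image _) (forall_mem_image.2 fun β' _ => hβ (mem_univ β'))
  linarith

theorem eventually_forall_isMinOn_exists_dist_lt {E : Type*} [PseudoMetricSpace E] {b : B → E}
    (hb : Continuous b) {φ : X → B → ℝ} (hφ : Continuous ↿φ) (u : X) {ε : ℝ} (hε : 0 < ε) :
    ∀ᶠ v in 𝓝 u, ∀ β', IsMinOn (φ v) univ β' →
      ∃ β, IsMinOn (φ u) univ β ∧ dist (b β') (b β) < ε := by
  filter_upwards [eventually_forall_isMinOn_mem hφ (Metric.isOpen_thickening.preimage hb)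
    fun β hβ => Metric.self_subset_thickening hε _ (mem_image_of_mem b hβ)] with v hv β' hβ'
  obtain ⟨_, ⟨β, hβ, rfl⟩, hdist⟩ := Metric.mem_thickening_iff.1 (hv β' hβ')
  exact ⟨β, hβ, hdist⟩

end ArgminSemicontinuity

theorem eventually_forall_eq_iSup_imp {ι X : Type*} [Finite ι] [TopologicalSpace X]
    {g : ι → X → ℝ} {u : X} (hg : ∀ i, ContinuousAt (g i) u) :
    ∀ᶠ v in 𝓝 u, ∀ i, g i v = ⨆ j, g j v → g i u = ⨆ j, g j u := by
  refine eventually_all.2 fun i => ?_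
  rcases (le_ciSup (Set.finite_range fun j => g j u).bddAbove i).eq_or_lt with hi | hi
  · exact .of_forall fun _ _ => hi
  have : Nonempty ι := ⟨i⟩
  obtain ⟨k, hk⟩ := exists_lt_of_lt_ciSup hi
  filter_upwards [(hg i).eventually_lt (hg k) hk] with v hv hmax
  exact absurd (hmax ▸ le_ciSup (Set.finite_range fun j => g j v).bddAbove k) hv.not_ge

theorem IsMinOn.ciInf_eq {B : Type*} {φ : B → ℝ} {β₀ : B} (h : IsMinOn φ univ β₀) :
    ⨅ β, φ β = φ β₀ :=
  have : Nonempty B := ⟨β₀⟩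
  le_antisymm (ciInf_le ⟨φ β₀, forall_mem_range.2 (isMinOn_univ_iff.1 h)⟩ β₀)
    (le_ciInf (isMinOn_univ_iff.1 h))

theorem abs_sub_sub_inner_le_of_isMinOn {E B : Type*} [NormedAddCommGroup E]
    [InnerProductSpace ℝ E] (b : B → E) (f : B → ℝ) {u s : E} {β₀ β₁ : B}
    (h₀ : IsMinOn (fun β => inner ℝ (b β) u - f β) univ β₀)
    (h₁ : IsMinOn (fun β => inner ℝ (b β) (u + s) - f β) univ β₁) :
    |(inner ℝ (b β₁) (u + s) - f β₁) - (inner ℝ (b β₀) u - f β₀) - inner ℝ (b β₁) s|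
      ≤ ‖b β₀ - b β₁‖ * ‖s‖ := by
  have h₀₁ := isMinOn_univ_iff.1 h₀ β₁
  have h₁₀ := isMinOn_univ_iff.1 h₁ β₀
  have hinner := real_inner_le_norm (b β₀ - b β₁) s
  simp only [inner_add_right, inner_sub_left] at h₀₁ h₁₀ hinner ⊢
  rw [abs_le]
  constructor <;> linarith [mul_nonneg (norm_nonneg (b β₀ - b β₁)) (norm_nonneg s)]

theorem stmt11_general {m : ℕ} {A : Type*} [Fintype A]
    {B : Type*} [MetricSpace B] [CompactSpace B]
    (b : A → B → EuclideanSpace ℝ (Fin m)) (f : A → B → ℝ)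
    (hb : ∀ α : A, Continuous (b α)) (hf : ∀ α : A, Continuous (f α))
    (G : EuclideanSpace ℝ (Fin m) → ℝ)
    (hG : ∀ u, G u = ⨆ α : A, ⨅ β : B, ((inner ℝ (b α β) u : ℝ) - f α β)) :
    ∀ (u : EuclideanSpace ℝ (Fin m)), ∀ ε > (0 : ℝ), ∃ δ > (0 : ℝ),
      ∀ s : EuclideanSpace ℝ (Fin m), 0 < ‖s‖ → ‖s‖ ≤ δ →
        ∀ αs : A, (⨅ β : B, ((inner ℝ (b αs β) (u + s) : ℝ) - f αs β)) = G (u + s) →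
          ∀ βs : B,
            (∀ β : B, (inner ℝ (b αs βs) (u + s) : ℝ) - f αs βs ≤
              (inner ℝ (b αs β) (u + s) : ℝ) - f αs β) →
            |G (u + s) - G u - (inner ℝ (b αs βs) s : ℝ)| ≤ ε * ‖s‖ := by
  intro u ε hε
  set φ : A → EuclideanSpace ℝ (Fin m) → B → ℝ := fun α v β => inner ℝ (b α β) v - f α β
  have hφ : ∀ α, Continuous ↿(φ α) := fun α =>
    (((hb α).comp continuous_snd).inner continuous_fst).sub ((hf α).comp continuous_snd)
  have hnear : ∀ᶠ v in 𝓝 u, (∀ α, (⨅ β, φ α v β) = G v → (⨅ β, φ α u β) = G u) ∧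
      ∀ α β', IsMinOn (φ α v) univ β' →
        ∃ β, IsMinOn (φ α u) univ β ∧ dist (b α β') (b α β) < ε := by
    simp only [hG]
    exact (eventually_forall_eq_iSup_imp fun α =>
        (continuous_iInf_of_compactSpace (hφ α)).continuousAt).and
      (eventually_all.2 fun α => eventually_forall_isMinOn_exists_dist_lt (hb α) (hφ α) u hε)
  obtain ⟨δ, hδ, hball⟩ := Metric.nhds_basis_closedBall.eventually_iff.1 hnear
  refine ⟨δ, hδ, fun s _ hs αs hαs βs hβs => ?_⟩
  obtain ⟨hactive, hclose⟩ := hball (show u + s ∈ Metric.closedBall u δ by simpa using hs)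
  have hβs' : IsMinOn (φ αs (u + s)) univ βs := isMinOn_univ_iff.2 hβs
  obtain ⟨β, hβ, hdist⟩ := hclose αs βs hβs'
  rw [← hαs, ← hactive αs hαs, hβs'.ciInf_eq, hβ.ciInf_eq]
  calc _ ≤ ‖b αs β - b αs βs‖ * ‖s‖ := abs_sub_sub_inner_le_of_isMinOn (b αs) (f αs) hβ hβs'
    _ ≤ ε * ‖s‖ := by
      rw [← dist_eq_norm, dist_comm]
      gcongr

/-- Semismoothness of the nonconvex max–min Hamiltonian
`G(u) = max_{α ∈ A} min_{β ∈ B} (b(α,β)·u - f(α,β))` on `ℝ^m`: for every `u` and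
`ε > 0` there is `δ > 0` such that for every `s` with `0 < ‖s‖ ≤ δ` and every pair of
optimizers `(αs, βs)` for the perturbed point `u + s`,
`|G(u+s) - G(u) - b(αs,βs)·s| ≤ ε‖s‖`. -/
theorem stmt11 {m : ℕ} {A : Type*} [Fintype A] [Nonempty A]
    {B : Type*} [MetricSpace B] [CompactSpace B] [Nonempty B]
    (b : A → B → EuclideanSpace ℝ (Fin m)) (f : A → B → ℝ)
    (hb : ∀ α : A, Continuous (b α)) (hf : ∀ α : A, Continuous (f α))
    (G : EuclideanSpace ℝ (Fin m) → ℝ)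
    (hG : ∀ u, G u = ⨆ α : A, ⨅ β : B, ((inner ℝ (b α β) u : ℝ) - f α β)) :
    ∀ (u : EuclideanSpace ℝ (Fin m)), ∀ ε > (0 : ℝ), ∃ δ > (0 : ℝ),
      ∀ s : EuclideanSpace ℝ (Fin m), 0 < ‖s‖ → ‖s‖ ≤ δ →
        ∀ αs : A, (⨅ β : B, ((inner ℝ (b αs β) (u + s) : ℝ) - f αs β)) = G (u + s) →
          ∀ βs : B,
            (∀ β : B, (inner ℝ (b αs βs) (u + s) : ℝ) - f αs βs ≤
              (inner ℝ (b αs β) (u + s) : ℝ) - f αs β) →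
            |G (u + s) - G u - (inner ℝ (b αs βs) s : ℝ)| ≤ ε * ‖s‖ :=
  stmt11_general b f hb hf G hG
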